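/- Let I := [ξ, η] ⊂ ℝ be a closed interval with 0 < D := diam(I) < 1 and minimal-order Farey element p/q + k. Set L := p/q + k − ξ and R := η − (p/q + k). Then the closed interval F(I) := [p/q + k − L/2, p/q + k + R/2] is contained in I and in the cover formed from the half Farey partition for I, and diam(F(I)) = D/2. -/
import Mathlib


/-- `F_n^ℤ`: real numbers that are rationals with denominator at most `n`. -/

lemma med_le_mid (A B P Q L : ℝ) (hB : 0 < B) (hQ : 0 < Q)
    (hlt : A * Q < P * B) (hL : Q ≤ L * B) :
    (L * A + P) / (L * B + Q) ≤ (A / B + P / Q) / 2 := by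
  have hden : 0 < L * B + Q := by linarith
  have h2 : A / B + P / Q = (A * Q + P * B) / (B * Q) := by
    field_simp
  rw [h2, div_div, div_le_div_iff₀ hden (by positivity)]
  nlinarith [mul_nonneg (sub_nonneg.mpr hL) (sub_nonneg.mpr hlt.le)]

lemma mid_le_med (C D P Q R : ℝ) (hD : 0 < D) (hQ : 0 < Q)
    (hlt : P * D < C * Q) (hR : Q ≤ R * D) :
    (P / Q + C / D) / 2 ≤ (P + R * C) / (Q + R * D) := by
  have hden : 0 < Q + R * D := by linarith
  have h2 : P / Q + C / D = (P * D + C * Q) / (Q * D) := by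
    field_simp
  rw [h2, div_div, div_le_div_iff₀ (by positivity) hden]
  nlinarith [mul_nonneg (sub_nonneg.mpr hR) (sub_nonneg.mpr hlt.le)]

def fareyZR (n : ℕ) : Set ℝ := {x | ∃ r : ℚ, r.den ≤ n ∧ x = (r : ℝ)}

/-- `x` and `y` are consecutive elements of `F_n^ℤ`. -/
def fareyZRConsec (n : ℕ) (x y : ℝ) : Prop :=
  x ∈ fareyZR n ∧ y ∈ fareyZR n ∧ x < y ∧ ∀ z ∈ fareyZR n, ¬(x < z ∧ z < y)

/-- `p/q + k` is the minimal-order Farey element of `[ξ, η]`, of order `q`. -/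
def minOrderFareyElt (ξ η x : ℝ) (q : ℕ) : Prop :=
  IsLeast {n : ℕ | 0 < n ∧ (fareyZR n ∩ Set.Icc ξ η).Nonempty} q ∧
  fareyZR q ∩ Set.Icc ξ η = {x}

/-- The cover formed from the half Farey partition, where for `p ≠ 0` the data
`a/b + k, p/q + k, c/d + k` are consecutive in `F_q^ℤ`. -/
def halfFareyCover (p a c k : ℤ) (q b d : ℕ) : Set ℝ :=
  if p = 0 then Set.Icc ((k : ℝ) - 1 / 2) ((k : ℝ) + 1 / 2)
  else Set.Icc
    (((⌈(q : ℝ) / (b : ℝ)⌉ : ℝ) * (a : ℝ) + (p : ℝ)) /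
      ((⌈(q : ℝ) / (b : ℝ)⌉ : ℝ) * (b : ℝ) + (q : ℝ)) + (k : ℝ))
    (((p : ℝ) + (⌈(q : ℝ) / (d : ℝ)⌉ : ℝ) * (c : ℝ)) /
      ((q : ℝ) + (⌈(q : ℝ) / (d : ℝ)⌉ : ℝ) * (d : ℝ)) + (k : ℝ))

theorem farey_half_interval (ξ η : ℝ) (p a c k : ℤ) (q b d : ℕ)
    (hq : 0 < q) (hb : 0 < b) (hd : 0 < d)
    (h0 : 0 < η - ξ) (h1 : η - ξ < 1)
    (hmin : minOrderFareyElt ξ η ((p : ℝ) / (q : ℝ) + (k : ℝ)) q)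
    (hpq : Int.gcd p (q : ℤ) = 1)
    (hab : Int.gcd a (b : ℤ) = 1) (hcd : Int.gcd c (d : ℤ) = 1)
    (hcons : p ≠ 0 →
      fareyZRConsec q ((a : ℝ) / (b : ℝ) + (k : ℝ)) ((p : ℝ) / (q : ℝ) + (k : ℝ)) ∧
      fareyZRConsec q ((p : ℝ) / (q : ℝ) + (k : ℝ)) ((c : ℝ) / (d : ℝ) + (k : ℝ))) :
    Set.Icc (((p : ℝ) / (q : ℝ) + (k : ℝ)) - (((p : ℝ) / (q : ℝ) + (k : ℝ)) - ξ) / 2)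
        (((p : ℝ) / (q : ℝ) + (k : ℝ)) + (η - ((p : ℝ) / (q : ℝ) + (k : ℝ))) / 2)
      ⊆ Set.Icc ξ η ∧
    Set.Icc (((p : ℝ) / (q : ℝ) + (k : ℝ)) - (((p : ℝ) / (q : ℝ) + (k : ℝ)) - ξ) / 2)
        (((p : ℝ) / (q : ℝ) + (k : ℝ)) + (η - ((p : ℝ) / (q : ℝ) + (k : ℝ))) / 2)
      ⊆ halfFareyCover p a c k q b d ∧
    (((p : ℝ) / (q : ℝ) + (k : ℝ)) + (η - ((p : ℝ) / (q : ℝ) + (k : ℝ))) / 2)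
      - (((p : ℝ) / (q : ℝ) + (k : ℝ)) - (((p : ℝ) / (q : ℝ) + (k : ℝ)) - ξ) / 2)
      = (η - ξ) / 2 := by
  obtain ⟨hleast, hsingle⟩ := hmin
  have hxmem : ((p : ℝ) / q + k) ∈ fareyZR q ∩ Set.Icc ξ η := by
    rw [hsingle]; rfl
  have hxl : ξ ≤ (p : ℝ) / q + k := hxmem.2.1
  have hxr : (p : ℝ) / q + k ≤ η := hxmem.2.2
  have hq' : (0:ℝ) < (q:ℝ) := by exact_mod_cast hq
  have hb' : (0:ℝ) < (b:ℝ) := by exact_mod_cast hb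
  have hd' : (0:ℝ) < (d:ℝ) := by exact_mod_cast hd
  refine ⟨Set.Icc_subset_Icc (by linarith) (by linarith), ?_, by ring⟩
  unfold halfFareyCover
  by_cases hp : p = 0
  · rw [if_pos hp]
    have hx0 : (p:ℝ) / q = 0 := by rw [hp]; simp
    rw [hx0] at hxl hxr
    apply Set.Icc_subset_Icc
    · rw [hx0]; linarith
    · rw [hx0]; linarith
  · rw [if_neg hp]
    obtain ⟨hc1, hc2⟩ := hcons hp
    have haF : (a : ℝ) / b + k ∈ fareyZR q := hc1.1
    have hcF : (c : ℝ) / d + k ∈ fareyZR q := hc2.2.1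
    have hax : (a : ℝ) / b + k < (p : ℝ) / q + k := hc1.2.2.1
    have hxc : (p : ℝ) / q + k < (c : ℝ) / d + k := hc2.2.2.1
    have haξ : (a : ℝ) / b + k < ξ := by
      by_contra h
      push_neg at h
      have hmem : (a : ℝ) / b + k ∈ fareyZR q ∩ Set.Icc ξ η :=
        ⟨haF, h, by linarith⟩
      rw [hsingle] at hmem
      simp only [Set.mem_singleton_iff] at hmem
      rw [hmem] at hax; linarith
    have hcη : η < (c : ℝ) / d + k := by
      by_contra h
      push_neg at h
      have hmem : (c : ℝ) / d + k ∈ fareyZR q ∩ Set.Icc ξ η :=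
        ⟨hcF, by linarith, h⟩
      rw [hsingle] at hmem
      simp only [Set.mem_singleton_iff] at hmem
      rw [hmem] at hxc; linarith
    have hL : (q:ℝ) ≤ (⌈(q : ℝ) / (b : ℝ)⌉ : ℝ) * b :=
      (div_le_iff₀ hb').mp (Int.le_ceil _)
    have hR : (q:ℝ) ≤ (⌈(q : ℝ) / (d : ℝ)⌉ : ℝ) * d :=
      (div_le_iff₀ hd').mp (Int.le_ceil _)
    have hlt1 : (a:ℝ) * q < (p:ℝ) * b := by
      have : (a:ℝ) / b < (p:ℝ) / q := by linarith
      exact (div_lt_div_iff₀ hb' hq').mp this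
    have hlt2 : (p:ℝ) * d < (c:ℝ) * q := by
      have : (p:ℝ) / q < (c:ℝ) / d := by linarith
      exact (div_lt_div_iff₀ hq' hd').mp this
    have key1 := med_le_mid (a:ℝ) (b:ℝ) (p:ℝ) (q:ℝ) ((⌈(q : ℝ) / (b : ℝ)⌉ : ℝ)) hb' hq' hlt1 hL
    have key2 := mid_le_med (c:ℝ) (d:ℝ) (p:ℝ) (q:ℝ) ((⌈(q : ℝ) / (d : ℝ)⌉ : ℝ)) hd' hq' hlt2 hR
    apply Set.Icc_subset_Icc
    · linarith
    · linarith
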